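/- arXiv:1302.7198 — 3 statements merged into one kernel-verified Lean document; each statement's English description precedes it below -/
import Mathlib

section
/- Let K be a δσ-field, A ∈ K^{n×n} and k := K^δ. Let R₁ and R₂ be σ-Picard-Vessiot rings for δ(y) = Ay satisfying R₁^δ = R₂^δ = k, with fundamental solution matrices Y₁ ∈ GLₙ(R₁) and Y₂ ∈ GLₙ(R₂), and set Z := (Y₁ ⊗ 1)⁻¹(1 ⊗ Y₂) ∈ GLₙ(R₁ ⊗_K R₂). Then (R₁ ⊗_K R₂)^δ = k{Z, 1/det(Z)}_σ, so in particular (R₁ ⊗_K R₂)^δ is a finitely σ-generated k-σ-algebra, and the canonical map R₁ ⊗_k (R₁ ⊗_K R₂)^δ → R₁ ⊗_K R₂ is an isomorphism of R₁-δσ-algebras. -/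
open scoped TensorProduct

universe u

/-- A δσ-ring: a commutative ring `R` with a derivation `δ` and a ring endomorphism `σ`
satisfying `δ (σ r) = ℏ • σ (δ r)` for a fixed δ-constant unit `ℏ`. -/
structure DSRing (R : Type u) [CommRing R] where
  δ : R → R
  σ : R →+* R
  hbar : Rˣ
  δ_add : ∀ a b : R, δ (a + b) = δ a + δ b
  δ_mul : ∀ a b : R, δ (a * b) = a * δ b + δ a * b
  δ_hbar : δ (hbar : R) = 0
  δσ_comm : ∀ r : R, δ (σ r) = (hbar : R) * σ (δ r)

namespace DSRing

variable {R : Type u} [CommRing R]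

/-- `I` is a δ-ideal, i.e. stable under the derivation. -/
def IsDeltaIdeal (D : DSRing R) (I : Ideal R) : Prop :=
  ∀ a ∈ I, D.δ a ∈ I

/-- `R` is δ-simple: its only δ-ideals are `(0)` and `R`. -/
def DeltaSimple (D : DSRing R) : Prop :=
  ∀ I : Ideal R, D.IsDeltaIdeal I → I = ⊥ ∨ I = ⊤

/-- The δσ-structure `DR` on `R` extends the δσ-structure `DK` on `K`. -/
def Extends {K : Type u} [CommRing K] [Algebra K R] (DR : DSRing R) (DK : DSRing K) : Prop :=
  (∀ a : K, DR.δ (algebraMap K R a) = algebraMap K R (DK.δ a)) ∧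
  (∀ a : K, DR.σ (algebraMap K R a) = algebraMap K R (DK.σ a)) ∧
  ((DR.hbar : R) = algebraMap K R ((DK.hbar : K)))

end DSRing

/-- The set of all entries of the matrices `σ^i(Y)`, `i ≥ 0`. -/
def sigmaOrbitEntries {R : Type u} [CommRing R] (σ : R →+* R) {ι : Type}
    (Y : Matrix ι ι R) : Set R :=
  {x | ∃ (i : ℕ) (j l : ι), x = (⇑σ)^[i] (Y j l)}

/-- The set of all inverses of the elements `σ^i(det Y)`, `i ≥ 0`. -/
def sigmaDetInvs {R : Type u} [CommRing R] (σ : R →+* R) {ι : Type} [Fintype ι]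
    [DecidableEq ι] (Y : Matrix ι ι R) : Set R :=
  {x | ∃ i : ℕ, x * (⇑σ)^[i] Y.det = 1}

/-- `K⟨Y⟩_σ` : the subfield of `L` generated over (the image of) `K` by all entries of
all matrices `σ^i(Y)`, `i ≥ 0`. -/
def sigmaGenField (K : Type u) {L : Type u} [Field K] [Field L] [Algebra K L]
    (σ : L →+* L) {ι : Type} (Y : Matrix ι ι L) : Subfield L :=
  Subfield.closure (Set.range (algebraMap K L) ∪ sigmaOrbitEntries σ Y)

/-- `K{Y, 1/det Y}_σ` : the `K`-subalgebra generated by the entries of the matrices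
`σ^i(Y)` and the inverses of the elements `σ^i(det Y)`, `i ≥ 0`. -/
def sigmaPVAlgebra (K : Type u) {R : Type u} [CommRing K] [CommRing R] [Algebra K R]
    (σ : R →+* R) {ι : Type} [Fintype ι] [DecidableEq ι] (Y : Matrix ι ι R) :
    Subalgebra K R :=
  Algebra.adjoin K (sigmaOrbitEntries σ Y ∪ sigmaDetInvs σ Y)

/-- `Y` is a fundamental solution matrix for `δ(y) = A y` : it is invertible and
satisfies `δ(Y) = A Y` entrywise. -/
def IsFundamental {K R : Type u} [CommRing K] [CommRing R] [Algebra K R] {ι : Type}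
    [Fintype ι] [DecidableEq ι] (δ : R → R) (A : Matrix ι ι K) (Y : Matrix ι ι R) : Prop :=
  IsUnit Y.det ∧ ∀ i j, δ (Y i j) = ∑ l, algebraMap K R (A i l) * Y l j

/-- `L|K` is a σ-Picard-Vessiot extension for `δ(y) = A y` with fundamental solution
matrix `Y`. -/
def IsPVExtensionWith {K L : Type u} [Field K] [Field L] [Algebra K L]
    (DK : DSRing K) (DL : DSRing L) {ι : Type} [Fintype ι] [DecidableEq ι]
    (A : Matrix ι ι K) (Y : Matrix ι ι L) : Prop :=
  DL.Extends DK ∧ IsFundamental DL.δ A Y ∧ sigmaGenField K DL.σ Y = ⊤ ∧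
    ∀ x : L, DL.δ x = 0 → ∃ a : K, DK.δ a = 0 ∧ algebraMap K L a = x

/-- `L|K` is a σ-Picard-Vessiot extension for `δ(y) = A y`. -/
def IsPVExtension {K L : Type u} [Field K] [Field L] [Algebra K L]
    (DK : DSRing K) (DL : DSRing L) {ι : Type} [Fintype ι] [DecidableEq ι]
    (A : Matrix ι ι K) : Prop :=
  ∃ Y : Matrix ι ι L, IsPVExtensionWith DK DL A Y

/-- `R` is a σ-Picard-Vessiot ring over `K` for `δ(y) = A y` with fundamental solution
matrix `Y`. -/
def IsPVRingWith {K R : Type u} [Field K] [CommRing R] [Algebra K R]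
    (DK : DSRing K) (DR : DSRing R) {ι : Type} [Fintype ι] [DecidableEq ι]
    (A : Matrix ι ι K) (Y : Matrix ι ι R) : Prop :=
  DR.Extends DK ∧ IsFundamental DR.δ A Y ∧ sigmaPVAlgebra K DR.σ Y = ⊤ ∧ DR.DeltaSimple

/-- `R` is a σ-Picard-Vessiot ring over `K` for `δ(y) = A y`. -/
def IsPVRing {K R : Type u} [Field K] [CommRing R] [Algebra K R]
    (DK : DSRing K) (DR : DSRing R) {ι : Type} [Fintype ι] [DecidableEq ι]
    (A : Matrix ι ι K) : Prop :=
  ∃ Y : Matrix ι ι R, IsPVRingWith DK DR A Y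

/-- δ-simplicity of a subalgebra `S` of `L`: every ideal of `S` stable under the
derivation (whenever the derivative of an element of `S` lies again in `S`) is trivial. -/
def DeltaSimpleSubalgebra {K L : Type u} [CommRing K] [CommRing L] [Algebra K L]
    (δ : L → L) (S : Subalgebra K L) : Prop :=
  ∀ I : Ideal S,
    (∀ a : S, a ∈ I → ∀ h : δ (a : L) ∈ S, (⟨δ (a : L), h⟩ : S) ∈ I) → I = ⊥ ∨ I = ⊤

/-- A σ-field `(k, σk)` is σ-closed: every finitely σ-generated `k`-σ-algebra which is a
σ-domain admits a `k`-σ-algebra morphism to `k`. -/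
def IsSigmaClosed {k : Type u} [Field k] (σk : k →+* k) : Prop :=
  ∀ (R : Type u) [CommRing R] [Algebra k R] (σR : R →+* R),
    (∀ a : k, σR (algebraMap k R a) = algebraMap k R (σk a)) →
    (∃ s : Finset R, Algebra.adjoin k {x | ∃ i : ℕ, ∃ b ∈ s, x = (⇑σR)^[i] b} = ⊤) →
    IsDomain R → Function.Injective ⇑σR →
    ∃ φ : R →ₐ[k] k, ∀ r, φ (σR r) = σk (φ r)

/-- A σ-ring `(A, σA)` is perfectly σ-reduced: whenever a product of σ-iterates of `f`
vanishes, `f = 0`. -/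
def PerfectlySigmaReduced (A : Type u) [CommRing A] (σA : A → A) : Prop :=
  ∀ (f : A) (m : ℕ) (α : Fin (m + 1) → ℕ), (∏ i, σA^[α i] f) = 0 → f = 0

section SigmaBase

variable (k : Type u) [Field k] (σk : k →+* k)
variable (A : Type u) [CommRing A] [Algebra k A] (σA : A →+* A)

/-- `A` is σ-separable over `k` : for every σ-field extension `k'` of `k`, the
endomorphism `σA ⊗ σ'` of `A ⊗[k] k'` is injective. -/
def SigmaSeparable : Prop :=
  ∀ (k' : Type u) [Field k'] [Algebra k k'] (σ' : k' →+* k'),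
    (∀ c : k, σ' (algebraMap k k' c) = algebraMap k k' (σk c)) →
    ∀ τ : (A ⊗[k] k') →+* (A ⊗[k] k'),
      (∀ (a : A) (c : k'), τ (a ⊗ₜ c) = σA a ⊗ₜ σ' c) →
      Function.Injective ⇑τ

/-- `A` is perfectly σ-separable over `k` : for every σ-field extension `k'` of `k`,
the σ-ring `A ⊗[k] k'` is perfectly σ-reduced. -/
def SigmaPerfSeparable : Prop :=
  ∀ (k' : Type u) [Field k'] [Algebra k k'] (σ' : k' →+* k'),
    (∀ c : k, σ' (algebraMap k k' c) = algebraMap k k' (σk c)) →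
    ∀ τ : (A ⊗[k] k') →+* (A ⊗[k] k'),
      (∀ (a : A) (c : k'), τ (a ⊗ₜ c) = σA a ⊗ₜ σ' c) →
      PerfectlySigmaReduced (A ⊗[k] k') ⇑τ

/-- `A` is σ-regular over `k` : for every σ-field extension `k'` of `k`, the σ-ring
`A ⊗[k] k'` is a σ-domain. -/
def SigmaRegular : Prop :=
  ∀ (k' : Type u) [Field k'] [Algebra k k'] (σ' : k' →+* k'),
    (∀ c : k, σ' (algebraMap k k' c) = algebraMap k k' (σk c)) →
    ∀ τ : (A ⊗[k] k') →+* (A ⊗[k] k'),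
      (∀ (a : A) (c : k'), τ (a ⊗ₜ c) = σA a ⊗ₜ σ' c) →
      IsDomain (A ⊗[k] k') ∧ Function.Injective ⇑τ

end SigmaBase

/-- The Krull dimension of a commutative ring, as a natural number
(with junk value `0` in the infinite cases). -/
noncomputable def krullDimNat (A : Type*) [CommRing A] : ℕ :=
  ENat.toNat (WithBot.unbotD 0 (ringKrullDim A))

/-- The σ-transcendence degree of `L` over `K` : the supremum of the sizes of finite
families of elements of `L` which are σ-algebraically independent over `K`. -/
noncomputable def sigmaTrdeg (K L : Type u) [Field K] [Field L] [Algebra K L]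
    (σL : L →+* L) : ℕ∞ :=
  sSup {n : ℕ∞ | ∃ r : ℕ, n = r ∧ ∃ x : Fin r → L,
    AlgebraicIndependent K fun p : ℕ × Fin r => (⇑σL)^[p.1] (x p.2)}

/-- A δ-ring: a commutative ring with a derivation. -/
structure DRing (R : Type u) [CommRing R] where
  δ : R → R
  δ_add : ∀ a b : R, δ (a + b) = δ a + δ b
  δ_mul : ∀ a b : R, δ (a * b) = a * δ b + δ a * b


namespace DSRing
variable {R : Type u} [CommRing R] (D : DSRing R)

/-- δ as an additive monoid hom. -/
def δhom : R →+ R := AddMonoidHom.mk' D.δ D.δ_add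

@[simp] theorem δhom_apply (x : R) : D.δhom x = D.δ x := rfl

theorem δ_zero : D.δ 0 = 0 := map_zero D.δhom

theorem δ_one : D.δ 1 = 0 := by
  have h := D.δ_mul 1 1
  rw [one_mul, one_mul, mul_one] at h
  have h2 : D.δ 1 + 0 = D.δ 1 + D.δ 1 := by rw [add_zero]; exact h
  exact (add_left_cancel h2).symm

theorem δ_inv {x y : R} (h : x * y = 1) (hx : D.δ x = 0) : D.δ y = 0 := by
  have h1 : D.δ (x * y) = 0 := by rw [h, D.δ_one]
  rw [D.δ_mul, hx, zero_mul, add_zero] at h1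
  have h2 : y * (x * D.δ y) = 0 := by rw [h1, mul_zero]
  calc D.δ y = (x * y) * D.δ y := by rw [h, one_mul]
    _ = y * (x * D.δ y) := by ring
    _ = 0 := h2

theorem δ_iterate {x : R} (hx : D.δ x = 0) (i : ℕ) : D.δ ((⇑D.σ)^[i] x) = 0 := by
  induction i with
  | zero => simpa using hx
  | succ n ih =>
      rw [Function.iterate_succ_apply', D.δσ_comm, ih, map_zero, mul_zero]

/-- The subring of δ-constants. -/
def constSubring : Subring R where
  carrier := {x | D.δ x = 0}
  zero_mem' := D.δ_zero
  one_mem' := D.δ_one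
  add_mem' := by intro a b ha hb; simp only [Set.mem_setOf_eq] at *; rw [D.δ_add, ha, hb, add_zero]
  neg_mem' := by
    intro a ha; simp only [Set.mem_setOf_eq] at *
    have := map_neg D.δhom a
    simp only [δhom_apply] at this
    rw [this, ha, neg_zero]
  mul_mem' := by intro a b ha hb; simp only [Set.mem_setOf_eq] at *; rw [D.δ_mul, ha, hb]; ring

@[simp] theorem mem_constSubring {x : R} : x ∈ D.constSubring ↔ D.δ x = 0 := Iff.rfl

theorem δ_sum {ι : Type*} (s : Finset ι) (f : ι → R) :
    D.δ (∑ i ∈ s, f i) = ∑ i ∈ s, D.δ (f i) := map_sum D.δhom f s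

end DSRing

/-- det of a matrix with entries in a subring lies in the subring. -/
theorem det_mem_subring {R : Type u} [CommRing R] (S : Subring R) {ι : Type} [Fintype ι]
    [DecidableEq ι] (M : Matrix ι ι R) (h : ∀ i j, M i j ∈ S) : M.det ∈ S := by
  rw [Matrix.det_apply]
  refine Subring.sum_mem _ fun σ _ => ?_
  refine zsmul_mem (Subring.prod_mem _ fun i _ => h _ _) _

section Core
variable {K R₁ T : Type u} [Field K] [CommRing R₁] [Algebra K R₁] [CommRing T]

/-- Core lemma: elements of `T` that are δ-constants and linearly independent over the
δ-constants of `K` are linearly independent over (the image of) `R₁`. -/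
theorem core_indep (DK : DSRing K) (D₁ : DSRing R₁) (ι : R₁ →+* T) (δT : T → T)
    (hsimp : D₁.DeltaSimple)
    (hc₁ : ∀ r : R₁, D₁.δ r = 0 → ∃ a : K, DK.δ a = 0 ∧ algebraMap K R₁ a = r)
    (hδι : ∀ r, δT (ι r) = ι (D₁.δ r))
    (hδadd : ∀ a b, δT (a + b) = δT a + δT b)
    (hδmul : ∀ a b, δT (a * b) = a * δT b + δT a * b)
    {m : ℕ} (u : Fin m → T) (hu : ∀ i, δT (u i) = 0)
    (hind : ∀ c : Fin m → K, (∀ i, DK.δ (c i) = 0) →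
        ∑ i, ι (algebraMap K R₁ (c i)) * u i = 0 → ∀ i, c i = 0)
    (r : Fin m → R₁) (hr : ∑ i, ι (r i) * u i = 0) : ∀ i, r i = 0 := by
  classical
  by_contra hcon
  push_neg at hcon
  obtain ⟨j, hj⟩ := hcon
  have hδh : ∀ (s : Finset (Fin m)) (f : Fin m → T),
      δT (∑ i ∈ s, f i) = ∑ i ∈ s, δT (f i) :=
    fun s f => map_sum (AddMonoidHom.mk' δT hδadd) f s
  set V : Set (Fin m → R₁) := {v | ∑ i, ι (v i) * u i = 0} with hV
  have hδV : ∀ v ∈ V, (fun i => D₁.δ (v i)) ∈ V := by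
    intro v hv
    have h0 : δT (∑ i, ι (v i) * u i) = 0 := by
      have : ∑ i, ι (v i) * u i = 0 := hv
      rw [this]
      simpa using hδh ∅ (fun i => 0)
    have heq : δT (∑ i, ι (v i) * u i) = ∑ i, ι (D₁.δ (v i)) * u i := by
      rw [hδh]
      refine Finset.sum_congr rfl fun i _ => ?_
      rw [hδmul, hu i, mul_zero, zero_add, hδι]
    rw [heq] at h0
    exact h0
  set supp : (Fin m → R₁) → Finset (Fin m) := fun v => Finset.univ.filter (fun i => v i ≠ 0)
    with hsupp
  have hmemsupp : ∀ v i, i ∈ supp v ↔ v i ≠ 0 := by intro v i; simp [hsupp]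
  have hQ : ∃ N : ℕ, ∃ v ∈ V, v ≠ 0 ∧ (supp v).card ≤ N := by
    refine ⟨m, r, hr, ?_, Finset.card_le_card (Finset.subset_univ _) |>.trans (by simp)⟩
    intro h0; exact hj (by rw [h0]; rfl)
  obtain ⟨v₀, hv₀V, hv₀ne, hv₀card⟩ := Nat.find_spec hQ
  have hNpos : 0 < Nat.find hQ := by
    rcases Nat.eq_zero_or_pos (Nat.find hQ) with h0 | h; swap; · exact h
    exfalso
    rw [h0, Nat.le_zero, Finset.card_eq_zero] at hv₀card
    apply hv₀ne; funext i
    by_contra hne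
    have : i ∈ supp v₀ := (hmemsupp v₀ i).2 hne
    rw [hv₀card] at this; exact absurd this (Finset.notMem_empty i)
  have hmin : ∀ v ∈ V, v ≠ 0 → Nat.find hQ ≤ (supp v).card := by
    intro v hvV hvne
    by_contra hlt
    push_neg at hlt
    exact Nat.find_min hQ hlt ⟨v, hvV, hvne, le_refl _⟩
  have hsne : (supp v₀).Nonempty := by
    rw [← Finset.card_pos]
    exact lt_of_lt_of_le hNpos (hmin v₀ hv₀V hv₀ne)
  obtain ⟨j₀, hj₀⟩ := hsne
  have hv₀j₀ : v₀ j₀ ≠ 0 := (hmemsupp v₀ j₀).1 hj₀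
  set I : Ideal R₁ :=
    { carrier := {a | ∃ v ∈ V, (∀ i, v i ≠ 0 → v₀ i ≠ 0) ∧ v j₀ = a}
      zero_mem' := ⟨fun _ => 0, by
          show ∑ i, ι (0:R₁) * u i = 0
          simp, fun i h => absurd rfl h, rfl⟩
      add_mem' := by
        rintro a b ⟨v, hvV, hvs, hva⟩ ⟨w, hwV, hws, hwb⟩
        refine ⟨fun i => v i + w i, ?_, ?_, by show v j₀ + w j₀ = a + b; rw [hva, hwb]⟩
        · show ∑ i, ι (v i + w i) * u i = 0
          have heq : ∀ i ∈ Finset.univ, ι (v i + w i) * u i = ι (v i) * u i + ι (w i) * u i := by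
            intro i _; rw [map_add, add_mul]
          rw [Finset.sum_congr rfl heq, Finset.sum_add_distrib]
          have h1 : ∑ i, ι (v i) * u i = 0 := hvV
          have h2 : ∑ i, ι (w i) * u i = 0 := hwV
          rw [h1, h2, add_zero]
        · intro i hi
          by_contra h0
          have hv0 : v i = 0 := by by_contra hh; exact (hvs i hh) h0
          have hw0 : w i = 0 := by by_contra hh; exact (hws i hh) h0
          exact hi (by show v i + w i = 0; rw [hv0, hw0, add_zero])
      smul_mem' := by
        rintro c a ⟨v, hvV, hvs, hva⟩
        refine ⟨fun i => c * v i, ?_, ?_, by show c * v j₀ = c • a; rw [hva, smul_eq_mul]⟩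
        · show ∑ i, ι (c * v i) * u i = 0
          have heq : ∀ i ∈ Finset.univ, ι (c * v i) * u i = ι c * (ι (v i) * u i) := by
            intro i _; rw [map_mul, mul_assoc]
          rw [Finset.sum_congr rfl heq, ← Finset.mul_sum]
          have h1 : ∑ i, ι (v i) * u i = 0 := hvV
          rw [h1, mul_zero]
        · intro i hi
          refine hvs i fun h0 => hi ?_
          show c * v i = 0
          rw [h0, mul_zero] } with hI
  have hIδ : D₁.IsDeltaIdeal I := by
    rintro a ⟨v, hvV, hvs, hva⟩
    refine ⟨fun i => D₁.δ (v i), hδV v hvV, ?_, by show D₁.δ (v j₀) = D₁.δ a; rw [hva]⟩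
    intro i hi
    refine hvs i fun h0 => hi ?_
    show D₁.δ (v i) = 0
    rw [h0, D₁.δ_zero]
  have hItop : I = ⊤ := by
    rcases hsimp I hIδ with hbot | htop
    · exfalso
      have hmem : v₀ j₀ ∈ I := ⟨v₀, hv₀V, fun _ h => h, rfl⟩
      rw [hbot] at hmem
      exact hv₀j₀ ((Submodule.mem_bot R₁).1 hmem)
    · exact htop
  have h1I : (1 : R₁) ∈ I := by rw [hItop]; trivial
  obtain ⟨v₁, hv₁V, hv₁s, hv₁j₀⟩ := h1I
  set w : Fin m → R₁ := fun i => D₁.δ (v₁ i) with hw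
  have hwV : w ∈ V := hδV v₁ hv₁V
  have hwj₀ : w j₀ = 0 := by show D₁.δ (v₁ j₀) = 0; rw [hv₁j₀, D₁.δ_one]
  have hwzero : w = 0 := by
    by_contra hwne
    have hcard : (supp w).card < Nat.find hQ := by
      have hsub : supp w ⊆ (supp v₀).erase j₀ := by
        intro i hi
        rw [hmemsupp] at hi
        rw [Finset.mem_erase, hmemsupp]
        constructor
        · intro h; rw [h] at hi; exact hi hwj₀
        · refine hv₁s i fun h0 => hi ?_
          show D₁.δ (v₁ i) = 0
          rw [h0, D₁.δ_zero]
      calc (supp w).card ≤ ((supp v₀).erase j₀).card := Finset.card_le_card hsub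
        _ < (supp v₀).card := Finset.card_erase_lt_of_mem hj₀
        _ ≤ Nat.find hQ := hv₀card
    exact absurd (hmin w hwV hwne) (not_le.2 hcard)
  have hv₁const : ∀ i, D₁.δ (v₁ i) = 0 := fun i => congrFun hwzero i
  choose c hc hcv using fun i => hc₁ (v₁ i) (hv₁const i)
  have hczero : ∀ i, c i = 0 := by
    refine hind c hc ?_
    have heq : ∀ i ∈ Finset.univ, ι (algebraMap K R₁ (c i)) * u i = ι (v₁ i) * u i := by
      intro i _; rw [hcv]
    rw [Finset.sum_congr rfl heq]
    exact hv₁V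
  have h10 : (1 : R₁) = 0 := by
    rw [← hv₁j₀, ← hcv j₀, hczero j₀, map_zero]
  exact hj (by rw [← mul_one (r j), h10, mul_zero])

theorem rep_mem (DK : DSRing K) (D₁ : DSRing R₁) (ι : R₁ →+* T) (δT : T → T)
    (hsimp : D₁.DeltaSimple)
    (hc₁ : ∀ r : R₁, D₁.δ r = 0 → ∃ a : K, DK.δ a = 0 ∧ algebraMap K R₁ a = r)
    (hδι : ∀ r, δT (ι r) = ι (D₁.δ r))
    (hδadd : ∀ a b, δT (a + b) = δT a + δT b)
    (hδmul : ∀ a b, δT (a * b) = a * δT b + δT a * b)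
    (S : Subring T) (hSK : ∀ c : K, DK.δ c = 0 → ι (algebraMap K R₁ c) ∈ S) :
    ∀ (m : ℕ) (r : Fin m → R₁) (s : Fin m → T), (∀ i, s i ∈ S) → (∀ i, δT (s i) = 0) →
      δT (∑ i, ι (r i) * s i) = 0 → (∑ i, ι (r i) * s i) ∈ S := by
  intro m
  induction m using Nat.strong_induction_on with
  | _ m IH =>
    intro r s hsS hsδ hδt
    by_cases hdep : ∃ c : Fin m → K, (∀ i, DK.δ (c i) = 0) ∧
        (∑ i, ι (algebraMap K R₁ (c i)) * s i = 0) ∧ ∃ j, c j ≠ 0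
    · obtain ⟨c, hcδ, hcrel, j, hcj⟩ := hdep
      cases m with
      | zero => exact j.elim0
      | succ m' =>
        have hQc : ι (algebraMap K R₁ (c j)⁻¹) * ι (r j) * ι (algebraMap K R₁ (c j))
            = ι (r j) := by
          rw [← map_mul, ← map_mul]
          congr 1
          calc algebraMap K R₁ (c j)⁻¹ * r j * algebraMap K R₁ (c j)
              = (algebraMap K R₁ ((c j)⁻¹ * c j)) * r j := by rw [map_mul]; ring
            _ = r j := by rw [inv_mul_cancel₀ hcj, map_one, one_mul]
        set r' : Fin m' → R₁ := fun i =>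
          r (j.succAbove i) - algebraMap K R₁ ((c j)⁻¹ * c (j.succAbove i)) * r j with hr'
        set s' : Fin m' → T := fun i => s (j.succAbove i) with hs'
        have h1 : ∑ i, ι (r (j.succAbove i)) * s (j.succAbove i)
            = (∑ i, ι (r i) * s i) - ι (r j) * s j := by
          rw [Fin.sum_univ_succAbove (fun i => ι (r i) * s i) j]; ring
        have h2 : ∑ i, ι (algebraMap K R₁ (c (j.succAbove i))) * s (j.succAbove i)
            = -(ι (algebraMap K R₁ (c j)) * s j) := by
          rw [Fin.sum_univ_succAbove (fun i => ι (algebraMap K R₁ (c i)) * s i) j] at hcrel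
          linear_combination hcrel
        have key : ∑ i, ι (r' i) * s' i = ∑ i, ι (r i) * s i := by
          have hterm : ∀ i ∈ Finset.univ, ι (r' i) * s' i
              = ι (r (j.succAbove i)) * s (j.succAbove i)
                - (ι (algebraMap K R₁ (c j)⁻¹) * ι (r j))
                  * (ι (algebraMap K R₁ (c (j.succAbove i))) * s (j.succAbove i)) := by
            intro i _
            show ι (r (j.succAbove i) - algebraMap K R₁ ((c j)⁻¹ * c (j.succAbove i)) * r j)
                * s (j.succAbove i) = _
            simp only [map_sub, map_mul]
            ring
          rw [Finset.sum_congr rfl hterm, Finset.sum_sub_distrib, ← Finset.mul_sum, h1, h2]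
          calc ((∑ i, ι (r i) * s i) - ι (r j) * s j)
                - ι (algebraMap K R₁ (c j)⁻¹) * ι (r j) * -(ι (algebraMap K R₁ (c j)) * s j)
              = ((∑ i, ι (r i) * s i) - ι (r j) * s j)
                + (ι (algebraMap K R₁ (c j)⁻¹) * ι (r j) * ι (algebraMap K R₁ (c j))) * s j := by
                ring
            _ = ∑ i, ι (r i) * s i := by rw [hQc]; ring
        rw [← key]
        exact IH m' (Nat.lt_succ_self m') r' s' (fun i => hsS _) (fun i => hsδ _)
          (by rw [key]; exact hδt)
    · push_neg at hdep
      have hδsum : ∑ i, ι (D₁.δ (r i)) * s i = 0 := by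
        have hδh : ∀ (t : Finset (Fin m)) (f : Fin m → T),
            δT (∑ i ∈ t, f i) = ∑ i ∈ t, δT (f i) :=
          fun t f => map_sum (AddMonoidHom.mk' δT hδadd) f t
        have heq : δT (∑ i, ι (r i) * s i) = ∑ i, ι (D₁.δ (r i)) * s i := by
          rw [hδh]
          refine Finset.sum_congr rfl fun i _ => ?_
          rw [hδmul, hsδ i, mul_zero, zero_add, hδι]
        rw [← heq, hδt]
      have hr0 : ∀ i, D₁.δ (r i) = 0 :=
        core_indep DK D₁ ι δT hsimp hc₁ hδι hδadd hδmul s hsδ hdep (fun i => D₁.δ (r i)) hδsum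
      choose c hc hcv using fun i => hc₁ (r i) (hr0 i)
      refine Subring.sum_mem _ fun i _ => ?_
      rw [← hcv i]
      exact S.mul_mem (hSK (c i) (hc i)) (hsS i)


end Core
/-- for two σ-Picard-Vessiot rings `R₁`, `R₂` for the same equation with
`R₁^δ = R₂^δ = k`, the δ-constants of `R₁ ⊗_K R₂` are the `k`-σ-algebra
`k{Z, 1/det Z}_σ`, and the canonical map `R₁ ⊗_k (R₁ ⊗_K R₂)^δ → R₁ ⊗_K R₂` is an
isomorphism. -/
theorem stmt_3 {K R₁ R₂ : Type u} [Field K] [CharZero K]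
    [CommRing R₁] [Algebra K R₁] [CommRing R₂] [Algebra K R₂]
    (DK : DSRing K) (D₁ : DSRing R₁) (D₂ : DSRing R₂) {n : ℕ}
    (A : Matrix (Fin n) (Fin n) K)
    (Y₁ : Matrix (Fin n) (Fin n) R₁) (Y₂ : Matrix (Fin n) (Fin n) R₂)
    (h₁ : IsPVRingWith DK D₁ A Y₁) (h₂ : IsPVRingWith DK D₂ A Y₂)
    (hc₁ : ∀ r : R₁, D₁.δ r = 0 → ∃ a : K, DK.δ a = 0 ∧ algebraMap K R₁ a = r)
    (hc₂ : ∀ r : R₂, D₂.δ r = 0 → ∃ a : K, DK.δ a = 0 ∧ algebraMap K R₂ a = r)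
    (DT : DSRing (R₁ ⊗[K] R₂))
    (hTδ : ∀ (a : R₁) (b : R₂),
      DT.δ (a ⊗ₜ[K] b) = D₁.δ a ⊗ₜ[K] b + a ⊗ₜ[K] D₂.δ b)
    (hTσ : ∀ (a : R₁) (b : R₂), DT.σ (a ⊗ₜ[K] b) = D₁.σ a ⊗ₜ[K] D₂.σ b)
    (hTh : (DT.hbar : R₁ ⊗[K] R₂) = algebraMap K (R₁ ⊗[K] R₂) (DK.hbar : K))
    (Z : Matrix (Fin n) (Fin n) (R₁ ⊗[K] R₂))
    (hZ : Z = (Y₁.map ⇑(Algebra.TensorProduct.includeLeftRingHom :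
        R₁ →+* R₁ ⊗[K] R₂))⁻¹ *
      Y₂.map ⇑(Algebra.TensorProduct.includeRight : R₂ →ₐ[K] R₁ ⊗[K] R₂)) :
    (∀ t : R₁ ⊗[K] R₂, DT.δ t = 0 ↔
      t ∈ Subring.closure
        ({x | ∃ c : K, DK.δ c = 0 ∧ x = algebraMap K (R₁ ⊗[K] R₂) c} ∪
          sigmaOrbitEntries DT.σ Z ∪ sigmaDetInvs DT.σ Z)) ∧
    (Subring.closure
      (Set.range ⇑(Algebra.TensorProduct.includeLeftRingHom :
          R₁ →+* R₁ ⊗[K] R₂) ∪ {t | DT.δ t = 0}) = ⊤) ∧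
    (∀ (m : ℕ) (u : Fin m → R₁ ⊗[K] R₂), (∀ i, DT.δ (u i) = 0) →
      (∀ c : Fin m → K, (∀ i, DK.δ (c i) = 0) →
        ∑ i, algebraMap K (R₁ ⊗[K] R₂) (c i) * u i = 0 → ∀ i, c i = 0) →
      ∀ r : Fin m → R₁,
        ∑ i, Algebra.TensorProduct.includeLeftRingHom (r i) * u i = 0 →
        ∀ i, r i = 0) := by
  classical
  obtain ⟨hext₁, hfund₁, hgen₁, hsimp₁⟩ := h₁
  obtain ⟨hext₂, hfund₂, hgen₂, hsimp₂⟩ := h₂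
  set ιL : R₁ →+* R₁ ⊗[K] R₂ := Algebra.TensorProduct.includeLeftRingHom with hιL
  set ιR : R₂ →ₐ[K] R₁ ⊗[K] R₂ := Algebra.TensorProduct.includeRight with hιR
  -- basic compatibilities
  have hδL : ∀ a : R₁, DT.δ (ιL a) = ιL (D₁.δ a) := by
    intro a
    show DT.δ (a ⊗ₜ[K] 1) = D₁.δ a ⊗ₜ[K] 1
    rw [hTδ, D₂.δ_one, TensorProduct.tmul_zero, add_zero]
  have hδR : ∀ b : R₂, DT.δ (ιR b) = ιR (D₂.δ b) := by
    intro b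
    show DT.δ ((1 : R₁) ⊗ₜ[K] b) = (1 : R₁) ⊗ₜ[K] D₂.δ b
    rw [hTδ, D₁.δ_one, TensorProduct.zero_tmul, zero_add]
  have hσL : ∀ a : R₁, DT.σ (ιL a) = ιL (D₁.σ a) := by
    intro a
    show DT.σ (a ⊗ₜ[K] 1) = D₁.σ a ⊗ₜ[K] 1
    rw [hTσ, map_one]
  have hσR : ∀ b : R₂, DT.σ (ιR b) = ιR (D₂.σ b) := by
    intro b
    show DT.σ ((1 : R₁) ⊗ₜ[K] b) = (1 : R₁) ⊗ₜ[K] D₂.σ b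
    rw [hTσ, map_one]
  have hσLi : ∀ (i : ℕ) (a : R₁), (⇑DT.σ)^[i] (ιL a) = ιL ((⇑D₁.σ)^[i] a) := by
    intro i a
    induction i with
    | zero => rfl
    | succ k ih =>
        rw [Function.iterate_succ_apply', Function.iterate_succ_apply', ih, hσL]
  have hσRi : ∀ (i : ℕ) (b : R₂), (⇑DT.σ)^[i] (ιR b) = ιR ((⇑D₂.σ)^[i] b) := by
    intro i b
    induction i with
    | zero => rfl
    | succ k ih =>
        rw [Function.iterate_succ_apply', Function.iterate_succ_apply', ih, hσR]
  have halgL : ∀ c : K, ιL (algebraMap K R₁ c) = algebraMap K (R₁ ⊗[K] R₂) c := fun c => rfl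
  have halgR : ∀ c : K, ιR (algebraMap K R₂ c) = algebraMap K (R₁ ⊗[K] R₂) c :=
    fun c => ιR.commutes c
  -- matrices
  set W : Matrix (Fin n) (Fin n) (R₁ ⊗[K] R₂) := Y₁.map ⇑ιL with hW
  set Y₂' : Matrix (Fin n) (Fin n) (R₁ ⊗[K] R₂) := Y₂.map ⇑ιR with hY₂'
  set A' : Matrix (Fin n) (Fin n) (R₁ ⊗[K] R₂) := A.map (algebraMap K (R₁ ⊗[K] R₂)) with hA'
  have hWdet : W.det = ιL Y₁.det := by
    rw [RingHom.map_det, RingHom.mapMatrix_apply]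
  have hWdetU : IsUnit W.det := by rw [hWdet]; exact hfund₁.1.map ιL
  have hWZ : W * Z = Y₂' := by
    rw [hZ, ← Matrix.mul_assoc, Matrix.mul_nonsing_inv W hWdetU, Matrix.one_mul]
  have hδW : ∀ i j, DT.δ (W i j) = ∑ l, A' i l * W l j := by
    intro i j
    show DT.δ (ιL (Y₁ i j)) = _
    rw [hδL, hfund₁.2 i j, map_sum]
    refine Finset.sum_congr rfl fun l _ => ?_
    rw [map_mul, halgL]
    rfl
  have hδY₂' : ∀ i j, DT.δ (Y₂' i j) = ∑ l, A' i l * Y₂' l j := by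
    intro i j
    show DT.δ (ιR (Y₂ i j)) = _
    rw [hδR, hfund₂.2 i j, map_sum]
    refine Finset.sum_congr rfl fun l _ => ?_
    rw [map_mul, halgR]
    rfl
  -- Z has constant entries
  have h3 : ∀ i q, ∑ p, W i p * DT.δ (Z p q) = 0 := by
    intro i q
    have h4 : DT.δ (Y₂' i q)
        = ∑ p, (W i p * DT.δ (Z p q) + DT.δ (W i p) * Z p q) := by
      conv_lhs => rw [← hWZ]
      rw [Matrix.mul_apply, DT.δ_sum]
      exact Finset.sum_congr rfl fun p _ => DT.δ_mul _ _
    have h5 : DT.δ (Y₂' i q) = ∑ p, DT.δ (W i p) * Z p q := by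
      rw [hδY₂' i q]
      calc ∑ l, A' i l * Y₂' l q
          = ∑ l, ∑ p, A' i l * (W l p * Z p q) := by
            refine Finset.sum_congr rfl fun l _ => ?_
            rw [← Finset.mul_sum, ← Matrix.mul_apply, hWZ]
        _ = ∑ p, ∑ l, A' i l * (W l p * Z p q) := Finset.sum_comm
        _ = ∑ p, DT.δ (W i p) * Z p q := by
            refine Finset.sum_congr rfl fun p _ => ?_
            rw [hδW i p, Finset.sum_mul]
            exact Finset.sum_congr rfl fun l _ => by ring
    have h6 : (∑ p, W i p * DT.δ (Z p q)) + ∑ p, DT.δ (W i p) * Z p q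
        = 0 + ∑ p, DT.δ (W i p) * Z p q := by
      rw [← Finset.sum_add_distrib, ← h4, h5, zero_add]
    exact add_right_cancel h6
  have hδZ : ∀ p q, DT.δ (Z p q) = 0 := by
    have hWDZ : W * Matrix.of (fun p q => DT.δ (Z p q)) = 0 := by
      ext i q
      rw [Matrix.mul_apply, Matrix.zero_apply]
      exact h3 i q
    have hDZ : Matrix.of (fun p q => DT.δ (Z p q)) = 0 := by
      calc Matrix.of (fun p q => DT.δ (Z p q))
          = 1 * Matrix.of (fun p q => DT.δ (Z p q)) := (Matrix.one_mul _).symm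
        _ = (W⁻¹ * W) * Matrix.of (fun p q => DT.δ (Z p q)) := by
            rw [Matrix.nonsing_inv_mul W hWdetU]
        _ = W⁻¹ * (W * Matrix.of (fun p q => DT.δ (Z p q))) := Matrix.mul_assoc _ _ _
        _ = 0 := by rw [hWDZ, Matrix.mul_zero]
    intro p q
    exact congrFun (congrFun hDZ p) q
  -- the subring S of the statement
  set S : Subring (R₁ ⊗[K] R₂) := Subring.closure
      ({x | ∃ c : K, DK.δ c = 0 ∧ x = algebraMap K (R₁ ⊗[K] R₂) c} ∪
        sigmaOrbitEntries DT.σ Z ∪ sigmaDetInvs DT.σ Z) with hS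
  have hKcS : ∀ c : K, DK.δ c = 0 → algebraMap K (R₁ ⊗[K] R₂) c ∈ S :=
    fun c hc => Subring.subset_closure (Or.inl (Or.inl ⟨c, hc, rfl⟩))
  have hZorbS : ∀ (i : ℕ) (p q : Fin n), (⇑DT.σ)^[i] (Z p q) ∈ S :=
    fun i p q => Subring.subset_closure (Or.inl (Or.inr ⟨i, p, q, rfl⟩))
  have hdetinvS : ∀ x, (∃ i : ℕ, x * (⇑DT.σ)^[i] Z.det = 1) → x ∈ S :=
    fun x hx => Subring.subset_closure (Or.inr hx)
  -- every element of S is a constant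
  have hSconst : ∀ x ∈ S, DT.δ x = 0 := by
    have hle : S ≤ DT.constSubring := by
      rw [hS]
      refine (Subring.closure_le (t := DT.constSubring)).2 ?_
      rintro x ((⟨c, hc, rfl⟩ | ⟨i, p, q, rfl⟩) | ⟨i, hx⟩)
      · show DT.δ (algebraMap K (R₁ ⊗[K] R₂) c) = 0
        rw [← halgL, hδL, hext₁.1, hc, map_zero, map_zero]
      · exact DT.δ_iterate (hδZ p q) i
      · have hdZ : DT.δ Z.det = 0 :=
          det_mem_subring DT.constSubring Z (fun p q => hδZ p q)
        have hdi : DT.δ ((⇑DT.σ)^[i] Z.det) = 0 := DT.δ_iterate hdZ i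
        exact DT.δ_inv (by rw [mul_comm]; exact hx) hdi
    exact fun x hx => hle hx
  -- the big subring B
  set B : Subring (R₁ ⊗[K] R₂) :=
    Subring.closure (Set.range ⇑ιL ∪ (S : Set (R₁ ⊗[K] R₂))) with hB
  have hιLB : ∀ a : R₁, ιL a ∈ B := fun a => Subring.subset_closure (Or.inl ⟨a, rfl⟩)
  have hSB : ∀ x ∈ S, x ∈ B := fun x hx => Subring.subset_closure (Or.inr hx)
  have hpow : ∀ i : ℕ, (⇑DT.σ)^[i] = ⇑(DT.σ ^ i) := fun i => (RingHom.coe_pow DT.σ i).symm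
  have hιRB : ∀ b : R₂, ιR b ∈ B := by
    intro b
    have hb : b ∈ Algebra.adjoin K (sigmaOrbitEntries D₂.σ Y₂ ∪ sigmaDetInvs D₂.σ Y₂) := by
      have : b ∈ (⊤ : Subalgebra K R₂) := trivial
      rw [← hgen₂] at this
      exact this
    refine Algebra.adjoin_induction ?_ ?_ ?_ ?_ hb
    · rintro x (⟨i, j, l, rfl⟩ | ⟨i, hx⟩)
      · -- orbit entries of Y₂
        rw [hσRi i (Y₂ j l) |>.symm]
        have hYZ : ιR (Y₂ j l) = ∑ p, W j p * Z p l := by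
          rw [← Matrix.mul_apply, hWZ]
          rfl
        rw [hYZ, hpow i, map_sum]
        refine Subring.sum_mem _ fun p _ => ?_
        rw [map_mul, ← hpow i]
        refine B.mul_mem ?_ (hSB _ (hZorbS i p l))
        show (⇑DT.σ)^[i] (ιL (Y₁ j p)) ∈ B
        rw [hσLi i (Y₁ j p)]
        exact hιLB _
      · -- inverses of σ-iterates of det Y₂
        have hd : IsUnit ((⇑D₁.σ)^[i] Y₁.det) := by
          rw [show (⇑D₁.σ)^[i] = ⇑(D₁.σ ^ i) from (RingHom.coe_pow D₁.σ i).symm]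
          exact hfund₁.1.map (D₁.σ ^ i)
        obtain ⟨w, hwd⟩ := hd.exists_right_inv
        have hσWdet : (⇑DT.σ)^[i] W.det = ιL ((⇑D₁.σ)^[i] Y₁.det) := by
          rw [hWdet, hσLi]
        have hv : (ιR x * (⇑DT.σ)^[i] W.det) * (⇑DT.σ)^[i] Z.det = 1 := by
          have hdet2 : Y₂'.det = ιR Y₂.det := by
            rw [hY₂', ← AlgHom.coe_toRingHom, RingHom.map_det, RingHom.mapMatrix_apply]
          calc (ιR x * (⇑DT.σ)^[i] W.det) * (⇑DT.σ)^[i] Z.det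
              = ιR x * ((⇑DT.σ)^[i] W.det * (⇑DT.σ)^[i] Z.det) := by ring
            _ = ιR x * (⇑DT.σ)^[i] (W.det * Z.det) := by rw [hpow i, map_mul]
            _ = ιR x * (⇑DT.σ)^[i] ((W * Z).det) := by rw [Matrix.det_mul]
            _ = ιR x * (⇑DT.σ)^[i] (ιR Y₂.det) := by rw [hWZ, hdet2]
            _ = ιR x * ιR ((⇑D₂.σ)^[i] Y₂.det) := by rw [hσRi]
            _ = ιR (x * (⇑D₂.σ)^[i] Y₂.det) := by rw [map_mul]
            _ = 1 := by rw [hx, map_one]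
        have hvS : (ιR x * (⇑DT.σ)^[i] W.det) ∈ S := hdetinvS _ ⟨i, hv⟩
        have hxeq : ιR x = (ιR x * (⇑DT.σ)^[i] W.det) * ιL w := by
          rw [mul_assoc, hσWdet, ← map_mul, hwd, map_one, mul_one]
        rw [hxeq]
        exact B.mul_mem (hSB _ hvS) (hιLB w)
    · intro c
      rw [halgR, ← halgL]
      exact hιLB _
    · intro x y _ _ hx hy
      rw [map_add]
      exact B.add_mem hx hy
    · intro x y _ _ hx hy
      rw [map_mul]
      exact B.mul_mem hx hy
  have hBtop : B = ⊤ := by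
    rw [eq_top_iff]
    rintro x -
    induction x using TensorProduct.induction_on with
    | zero => exact B.zero_mem
    | tmul a b =>
        have htm : a ⊗ₜ[K] b = ιL a * ιR b := by
          rw [hιL, hιR, Algebra.TensorProduct.includeLeftRingHom_apply,
            Algebra.TensorProduct.includeRight_apply, Algebra.TensorProduct.tmul_mul_tmul,
            mul_one, one_mul]
        rw [htm]
        exact B.mul_mem (hιLB a) (hιRB b)
    | add x y hx hy => exact B.add_mem hx hy
  have hsmul : ∀ (a : R₁) (x : R₁ ⊗[K] R₂), a • x = ιL a * x := by
    intro a x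
    induction x using TensorProduct.induction_on with
    | zero => rw [smul_zero, mul_zero]
    | tmul p q =>
        rw [TensorProduct.smul_tmul']
        show (a • p) ⊗ₜ[K] q = (a ⊗ₜ[K] (1 : R₂)) * (p ⊗ₜ[K] q)
        rw [Algebra.TensorProduct.tmul_mul_tmul, one_mul, smul_eq_mul]
    | add x y hx hy => rw [smul_add, mul_add, hx, hy]
  -- every element lies in the R₁-span of S
  have hmemspan : ∀ t : R₁ ⊗[K] R₂, t ∈ Submodule.span R₁ ((S : Set (R₁ ⊗[K] R₂))) := by
    have hmul : ∀ x ∈ Submodule.span R₁ ((S : Set (R₁ ⊗[K] R₂))),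
        ∀ y ∈ Submodule.span R₁ ((S : Set (R₁ ⊗[K] R₂))),
        x * y ∈ Submodule.span R₁ ((S : Set (R₁ ⊗[K] R₂))) := by
      intro x hx y hy
      have hxy := Submodule.mul_mem_mul hx hy
      rw [Submodule.span_mul_span] at hxy
      refine Submodule.span_mono ?_ hxy
      rintro z ⟨a, ha, b, hb, rfl⟩
      exact S.mul_mem ha hb
    set P : Subring (R₁ ⊗[K] R₂) :=
      { carrier := (Submodule.span R₁ ((S : Set (R₁ ⊗[K] R₂))) : Set (R₁ ⊗[K] R₂))
        zero_mem' := Submodule.zero_mem _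
        one_mem' := Submodule.subset_span S.one_mem
        add_mem' := fun hx hy => Submodule.add_mem _ hx hy
        neg_mem' := fun hx => Submodule.neg_mem _ hx
        mul_mem' := fun hx hy => hmul _ hx _ hy } with hP
    intro t
    have hBP : B ≤ P := by
      rw [hB]
      refine Subring.closure_le.2 ?_
      rintro x (⟨a, rfl⟩ | hx)
      · show ιL a ∈ Submodule.span R₁ ((S : Set (R₁ ⊗[K] R₂)))
        have : ιL a = a • (1 : R₁ ⊗[K] R₂) := by
          rw [hsmul, mul_one]
        rw [this]
        exact Submodule.smul_mem _ a (Submodule.subset_span S.one_mem)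
      · exact Submodule.subset_span hx
    exact hBP (by rw [hBtop]; trivial)
  -- the forward direction of statement 1
  have hconst_in_S : ∀ t : R₁ ⊗[K] R₂, DT.δ t = 0 → t ∈ S := by
    intro t ht
    obtain ⟨f, hfsupp, hfsum⟩ := Submodule.mem_span_set.1 (hmemspan t)
    set m := f.support.card with hm
    set e : Fin m ≃ {x // x ∈ f.support} := f.support.equivFin.symm with he
    have hsum : ∑ i, ιL (f ((e i : R₁ ⊗[K] R₂))) * (e i : R₁ ⊗[K] R₂) = t := by
      have h1 : ∑ i, ιL (f ((e i : R₁ ⊗[K] R₂))) * (e i : R₁ ⊗[K] R₂)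
          = ∑ x ∈ f.support.attach, ιL (f (x : R₁ ⊗[K] R₂)) * (x : R₁ ⊗[K] R₂) := by
        rw [← Finset.univ_eq_attach]
        exact Equiv.sum_comp e (fun x : {x // x ∈ f.support} =>
          ιL (f (x : R₁ ⊗[K] R₂)) * (x : R₁ ⊗[K] R₂))
      rw [h1, Finset.sum_attach f.support (fun x => ιL (f x) * x)]
      rw [← hfsum]
      rw [Finsupp.sum]
      refine Finset.sum_congr rfl fun x _ => ?_
      rw [hsmul]
    have hrep := rep_mem DK D₁ ιL DT.δ hsimp₁ hc₁ hδL DT.δ_add DT.δ_mul S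
      (fun c hc => hKcS c hc) m
      (fun i => f ((e i : R₁ ⊗[K] R₂))) (fun i => (e i : R₁ ⊗[K] R₂))
      (fun i => hfsupp (e i).2) (fun i => hSconst _ (hfsupp (e i).2))
      (by rw [hsum]; exact ht)
    rw [hsum] at hrep
    exact hrep
  refine ⟨?_, ?_, ?_⟩
  · intro t
    exact ⟨fun ht => hconst_in_S t ht, fun ht => hSconst t ht⟩
  · rw [eq_top_iff, ← hBtop, hB]
    refine Subring.closure_mono ?_
    refine Set.union_subset_union_right _ ?_
    intro x hx
    exact hSconst x hx
  · intro m u hu hind r hr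
    exact fun i => core_indep DK D₁ ιL DT.δ hsimp₁ hc₁ hδL DT.δ_add DT.δ_mul u hu
      (fun c hc hc0 => hind c hc hc0) r hr i
end

section
/- Let k be a σ-closed σ-field and R a finitely σ-generated k-σ-algebra. Then the following are equivalent: (i) there exists a morphism R → k of k-σ-algebras; (ii) there exists a σ-prime ideal in R, i.e., a prime ideal 𝔮 of R with σ⁻¹(𝔮) = 𝔮. -/
open scoped TensorProduct

universe u

/-- over a σ-closed σ-field `k`, a finitely σ-generated `k`-σ-algebra `R`
admits a `k`-σ-algebra morphism `R → k` iff `R` contains a σ-prime ideal. -/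
theorem stmt_15 {k R : Type u} [Field k] [CommRing R] [Algebra k R]
    (σk : k →+* k) (hclosed : IsSigmaClosed σk)
    (σR : R →+* R)
    (hcompat : ∀ a : k, σR (algebraMap k R a) = algebraMap k R (σk a))
    (hfg : ∃ s : Finset R,
      Algebra.adjoin k {x | ∃ i : ℕ, ∃ b ∈ s, x = (⇑σR)^[i] b} = ⊤) :
    (∃ φ : R →ₐ[k] k, ∀ r, φ (σR r) = σk (φ r)) ↔
    (∃ 𝔮 : Ideal R, 𝔮.IsPrime ∧ Ideal.comap σR 𝔮 = 𝔮) := by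
  constructor
  · rintro ⟨φ, hφ⟩
    refine ⟨RingHom.ker φ.toRingHom, RingHom.ker_isPrime _, ?_⟩
    ext r
    simp only [Ideal.mem_comap, RingHom.mem_ker, AlgHom.toRingHom_eq_coe,
      RingHom.coe_coe, hφ r]
    exact ⟨fun h => σk.injective (by simpa using h), fun h => by simp [h]⟩
  · rintro ⟨𝔮, hp, heq⟩
    haveI := hp
    have hle : 𝔮 ≤ Ideal.comap σR 𝔮 := heq.ge
    let σQ : R ⧸ 𝔮 →+* R ⧸ 𝔮 := Ideal.quotientMap 𝔮 σR hle
    have hmk : ∀ (i : ℕ) (x : R), (⇑σQ)^[i] (Ideal.Quotient.mk 𝔮 x)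
        = Ideal.Quotient.mk 𝔮 ((⇑σR)^[i] x) := by
      intro i
      induction i with
      | zero => intro x; simp
      | succ n ih =>
        intro x
        rw [Function.iterate_succ_apply, Function.iterate_succ_apply]
        rw [show σQ (Ideal.Quotient.mk 𝔮 x) = Ideal.Quotient.mk 𝔮 (σR x) from
          Ideal.quotientMap_mk, ih]
    have hcompatQ : ∀ a : k, σQ (algebraMap k (R ⧸ 𝔮) a)
        = algebraMap k (R ⧸ 𝔮) (σk a) := by
      intro a
      have h1 : algebraMap k (R ⧸ 𝔮) a = Ideal.Quotient.mk 𝔮 (algebraMap k R a) := rfl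
      have h2 : algebraMap k (R ⧸ 𝔮) (σk a)
          = Ideal.Quotient.mk 𝔮 (algebraMap k R (σk a)) := rfl
      rw [h1, h2, show σQ (Ideal.Quotient.mk 𝔮 (algebraMap k R a))
        = Ideal.Quotient.mk 𝔮 (σR (algebraMap k R a)) from Ideal.quotientMap_mk,
        hcompat]
    have hfgQ : ∃ s : Finset (R ⧸ 𝔮),
        Algebra.adjoin k {x | ∃ i : ℕ, ∃ b ∈ s, x = (⇑σQ)^[i] b} = ⊤ := by
      classical
      obtain ⟨s, hs⟩ := hfg
      refine ⟨s.image (Ideal.Quotient.mk 𝔮), ?_⟩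
      rw [eq_top_iff]
      have himg : (Ideal.Quotient.mkₐ k 𝔮) ''
          {x | ∃ i : ℕ, ∃ b ∈ s, x = (⇑σR)^[i] b}
          ⊆ {x | ∃ i : ℕ, ∃ b ∈ s.image (Ideal.Quotient.mk 𝔮), x = (⇑σQ)^[i] b} := by
        rintro _ ⟨y, ⟨i, b, hb, rfl⟩, rfl⟩
        exact ⟨i, Ideal.Quotient.mk 𝔮 b, Finset.mem_image_of_mem _ hb, (hmk i b).symm⟩
      calc (⊤ : Subalgebra k (R ⧸ 𝔮))
          = (⊤ : Subalgebra k R).map (Ideal.Quotient.mkₐ k 𝔮) := by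
            rw [Algebra.map_top]
            exact ((AlgHom.range_eq_top _).mpr
              (Ideal.Quotient.mkₐ_surjective k 𝔮)).symm
        _ = (Algebra.adjoin k {x | ∃ i : ℕ, ∃ b ∈ s, x = (⇑σR)^[i] b}).map
              (Ideal.Quotient.mkₐ k 𝔮) := by rw [hs]
        _ = Algebra.adjoin k ((Ideal.Quotient.mkₐ k 𝔮) ''
              {x | ∃ i : ℕ, ∃ b ∈ s, x = (⇑σR)^[i] b}) := AlgHom.map_adjoin _ _
        _ ≤ _ := Algebra.adjoin_mono himg
    have hdom : IsDomain (R ⧸ 𝔮) := Ideal.Quotient.isDomain 𝔮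
    have hinj : Function.Injective ⇑σQ := by
      intro a b hab
      obtain ⟨x, rfl⟩ := Ideal.Quotient.mk_surjective a
      obtain ⟨y, rfl⟩ := Ideal.Quotient.mk_surjective b
      rw [show σQ (Ideal.Quotient.mk 𝔮 x) = Ideal.Quotient.mk 𝔮 (σR x) from
        Ideal.quotientMap_mk, show σQ (Ideal.Quotient.mk 𝔮 y)
        = Ideal.Quotient.mk 𝔮 (σR y) from Ideal.quotientMap_mk,
        Ideal.Quotient.eq] at hab
      rw [Ideal.Quotient.eq]
      have : σR (x - y) ∈ 𝔮 := by rwa [map_sub]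
      have : x - y ∈ Ideal.comap σR 𝔮 := this
      rwa [heq] at this
    obtain ⟨ψ, hψ⟩ := hclosed (R ⧸ 𝔮) σQ hcompatQ hfgQ hdom hinj
    refine ⟨ψ.comp (Ideal.Quotient.mkₐ k 𝔮), fun r => ?_⟩
    have : Ideal.Quotient.mkₐ k 𝔮 (σR r) = σQ (Ideal.Quotient.mk 𝔮 r) :=
      (Ideal.quotientMap_mk).symm
    simp only [AlgHom.comp_apply, this, hψ]
    rfl
end

section
/- Let k be a σ-closed σ-field, R a finitely σ-generated k-σ-algebra and 𝔞 a perfect σ-ideal of R. Then 𝔞 is the intersection of all maximal σ-prime ideals of R containing 𝔞, where a maximal σ-prime ideal is a σ-prime ideal that is maximal in the set of all σ-prime ideals of R ordered by inclusion. -/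
open scoped TensorProduct

universe u

section PerfectAux
variable {R : Type u} [CommRing R]

/-- A perfect σ-ideal. -/
def IsPerfIdeal (σR : R →+* R) (𝔭 : Ideal R) : Prop :=
  (∀ a ∈ 𝔭, σR a ∈ 𝔭) ∧
  ∀ (r : R) (m : ℕ) (α : Fin (m + 1) → ℕ), (∏ i, (⇑σR)^[α i] r) ∈ 𝔭 → r ∈ 𝔭

variable {σR : R →+* R} {𝔭 : Ideal R}

lemma IsPerfIdeal.step (h𝔭 : IsPerfIdeal σR 𝔭) {a b : R} (h : a * b ∈ 𝔭) :
    a * σR b ∈ 𝔭 := by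
  apply h𝔭.2 _ 1 ![0, 1]
  have h1 : σR (a * b) ∈ 𝔭 := h𝔭.1 _ h
  have h2 : (∏ i : Fin 2, (⇑σR)^[(![0,1] : Fin 2 → ℕ) i] (a * σR b))
      = σR (a * b) * (a * σR (σR b)) := by
    rw [Fin.prod_univ_two]
    simp only [Matrix.cons_val_zero, Matrix.cons_val_one, Matrix.head_cons,
      Function.iterate_zero_apply, Function.iterate_one, map_mul]
    ring
  exact h2 ▸ Ideal.mul_mem_right _ _ h1

lemma IsPerfIdeal.wm (h𝔭 : IsPerfIdeal σR 𝔭) {a b : R} (h : a * b ∈ 𝔭) :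
    ∀ i : ℕ, a * (⇑σR)^[i] b ∈ 𝔭
  | 0 => h
  | (i + 1) => by
      rw [Function.iterate_succ_apply']
      exact h𝔭.step (h𝔭.wm h i)

lemma IsPerfIdeal.absorb (h𝔭 : IsPerfIdeal σR 𝔭) {w z : R} {m : ℕ}
    {α : Fin (m + 1) → ℕ} (h : (∏ i, (⇑σR)^[α i] w) * z ∈ 𝔭) : w * z ∈ 𝔭 := by
  apply h𝔭.2 _ m α
  have h1 : (∏ i, (⇑σR)^[α i] w) * (⇑σR)^[α 0] z ∈ 𝔭 := h𝔭.wm h (α 0)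
  have key : (∏ i, (⇑σR)^[α i] (w * z)) =
      ((∏ i, (⇑σR)^[α i] w) * (⇑σR)^[α 0] z) * ∏ i : Fin m, (⇑σR)^[α i.succ] z := by
    have : ∀ (i : Fin (m+1)), (⇑σR)^[α i] (w * z) = (⇑σR)^[α i] w * (⇑σR)^[α i] z := by
      intro i; exact iterate_map_mul σR _ _ _
    rw [Finset.prod_congr rfl (fun i _ => this i), Finset.prod_mul_distrib,
      Fin.prod_univ_succ (fun i => (⇑σR)^[α i] z)]
    ring
  exact key ▸ Ideal.mul_mem_right _ _ h1

end PerfectAux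
section PCAux
variable {R : Type u} [CommRing R]

/-- Perfect closure of a set: intersection of perfect σ-ideals containing it. -/
def pcl (σR : R →+* R) (s : Set R) : Ideal R :=
  sInf {I : Ideal R | s ⊆ I ∧ IsPerfIdeal σR I}

variable {σR : R →+* R}

lemma subset_pcl {s : Set R} : s ⊆ (pcl σR s : Set R) := by
  intro x hx
  rw [SetLike.mem_coe, pcl, Submodule.mem_sInf]
  exact fun I hI => hI.1 hx

lemma pcl_le {s : Set R} {I : Ideal R} (h1 : s ⊆ I) (h2 : IsPerfIdeal σR I) :
    pcl σR s ≤ I := sInf_le ⟨h1, h2⟩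

lemma pcl_isPerf {s : Set R} : IsPerfIdeal σR (pcl σR s) := by
  constructor
  · intro a ha
    rw [pcl, Submodule.mem_sInf] at ha ⊢
    exact fun I hI => hI.2.1 a (ha I hI)
  · intro r m α h
    rw [pcl, Submodule.mem_sInf] at h ⊢
    exact fun I hI => hI.2.2 r m α (h I hI)

/-- The ideal `{v | x * v ∈ 𝔭}`. -/
def divIdeal (𝔭 : Ideal R) (x : R) : Ideal R where
  carrier := {v | x * v ∈ 𝔭}
  add_mem' := fun {a b} ha hb => by simpa [mul_add] using Ideal.add_mem 𝔭 ha hb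
  zero_mem' := by simp
  smul_mem' := fun c a ha => by
    simp only [Set.mem_setOf_eq, smul_eq_mul] at *
    rw [mul_left_comm]
    exact Ideal.mul_mem_left _ _ ha

lemma mem_divIdeal {𝔭 : Ideal R} {x v : R} : v ∈ divIdeal 𝔭 x ↔ x * v ∈ 𝔭 := Iff.rfl

lemma divIdeal_perf {𝔭 : Ideal R} (h𝔭 : IsPerfIdeal σR 𝔭) (x : R) :
    IsPerfIdeal σR (divIdeal 𝔭 x) := by
  constructor
  · intro a ha
    exact h𝔭.step ha
  · intro r m α h
    rw [mem_divIdeal, mul_comm] at h ⊢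
    exact h𝔭.absorb h

/-- The ideal `{u | ∀ v ∈ J, u * v ∈ 𝔭}`. -/
def divIdeal2 (𝔭 J : Ideal R) : Ideal R where
  carrier := {u | ∀ v ∈ J, u * v ∈ 𝔭}
  add_mem' := fun {a b} ha hb v hv => by
    simpa [add_mul] using Ideal.add_mem 𝔭 (ha v hv) (hb v hv)
  zero_mem' := fun v hv => by simp
  smul_mem' := fun c a ha v hv => by
    simp only [smul_eq_mul, mul_assoc]
    exact Ideal.mul_mem_left _ _ (ha v hv)

lemma divIdeal2_perf {𝔭 J : Ideal R} (h𝔭 : IsPerfIdeal σR 𝔭) :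
    IsPerfIdeal σR (divIdeal2 𝔭 J) := by
  constructor
  · intro a ha v hv
    rw [mul_comm]
    exact h𝔭.step (mul_comm a v ▸ ha v hv)
  · intro r m α h v hv
    exact h𝔭.absorb (h v hv)

lemma pcl_mul {𝔭 : Ideal R} (h𝔭 : IsPerfIdeal σR 𝔭) {x y : R} (hxy : x * y ∈ 𝔭)
    {u v : R} (hu : u ∈ pcl σR (↑𝔭 ∪ {x})) (hv : v ∈ pcl σR (↑𝔭 ∪ {y})) :
    u * v ∈ 𝔭 := by
  have hx : pcl σR (↑𝔭 ∪ {y}) ≤ divIdeal 𝔭 x := by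
    apply pcl_le _ (divIdeal_perf h𝔭 x)
    rintro z (hz | rfl)
    · exact Ideal.mul_mem_left _ _ hz
    · exact hxy
  have hD : pcl σR (↑𝔭 ∪ {x}) ≤ divIdeal2 𝔭 (pcl σR (↑𝔭 ∪ {y})) := by
    apply pcl_le _ (divIdeal2_perf h𝔭)
    rintro z (hz | rfl) w hw
    · exact Ideal.mul_mem_right _ _ hz
    · exact hx hw
  exact hD hu v hv

end PCAux
section Exists
variable {R : Type u} [CommRing R]

lemma exists_sigma_prime (σR : R →+* R) {𝔞 : Ideal R}
    (h𝔞 : IsPerfIdeal σR 𝔞) {f : R} (hf : f ∉ 𝔞) :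
    ∃ 𝔭 : Ideal R, 𝔭.IsPrime ∧ Ideal.comap σR 𝔭 = 𝔭 ∧ 𝔞 ≤ 𝔭 ∧ f ∉ 𝔭 := by
  set T : Set R := {t | ∃ (m : ℕ) (α : Fin (m + 1) → ℕ), t = ∏ i, (⇑σR)^[α i] f}
    with hT
  have hfT : f ∈ T := ⟨0, fun _ => 0, by simp⟩
  have hTmul : ∀ t1 ∈ T, ∀ t2 ∈ T, t1 * t2 ∈ T := by
    rintro _ ⟨m, α, rfl⟩ _ ⟨n, β, rfl⟩
    refine ⟨m + n + 1, (Fin.append α β) ∘ (Fin.cast (by omega)), ?_⟩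
    refine ((Fintype.prod_equiv (finCongr (show m + n + 1 + 1 = m + 1 + (n + 1) by omega))
      _ (fun i : Fin (m + 1 + (n + 1)) => (⇑σR)^[Fin.append α β i] f)
      (fun i => rfl)).trans ?_).symm
    rw [Fin.prod_univ_add]
    simp [Fin.append_left, Fin.append_right]
  -- the Zorn family
  set F : Set (Ideal R) := {I | IsPerfIdeal σR I ∧ 𝔞 ≤ I ∧ ∀ t ∈ T, t ∉ I} with hF
  have h𝔞F : 𝔞 ∈ F := by
    refine ⟨h𝔞, le_rfl, ?_⟩
    rintro _ ⟨m, α, rfl⟩ ht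
    exact hf (h𝔞.2 f m α ht)
  have hzorn : ∀ c ⊆ F, IsChain (· ≤ ·) c → ∀ y ∈ c, ∃ ub ∈ F, ∀ z ∈ c, z ≤ ub := by
    intro c hcF hchain y hyc
    have hdir : DirectedOn (· ≤ ·) c := hchain.directedOn
    have hne : c.Nonempty := ⟨y, hyc⟩
    have hmem : ∀ x : R, x ∈ sSup c ↔ ∃ I ∈ c, x ∈ I := fun x =>
      Submodule.mem_sSup_of_directed hne hdir
    refine ⟨sSup c, ⟨⟨?_, ?_⟩, ?_, ?_⟩, fun z hz => le_sSup hz⟩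
    · intro a ha
      obtain ⟨I, hIc, haI⟩ := (hmem a).1 ha
      exact (hmem _).2 ⟨I, hIc, (hcF hIc).1.1 a haI⟩
    · intro r m α h
      obtain ⟨I, hIc, hI⟩ := (hmem _).1 h
      exact (hmem r).2 ⟨I, hIc, (hcF hIc).1.2 r m α hI⟩
    · exact le_trans ((hcF hyc).2.1) (le_sSup hyc)
    · intro t ht htc
      obtain ⟨I, hIc, hI⟩ := (hmem t).1 htc
      exact (hcF hIc).2.2 t ht hI
  obtain ⟨𝔭, h𝔞𝔭', hmaximal⟩ := zorn_le_nonempty₀ F hzorn 𝔞 h𝔞F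
  obtain ⟨hperf, h𝔞𝔭, hTdisj⟩ := hmaximal.1
  -- 𝔭 is prime
  have hf𝔭 : f ∉ 𝔭 := hTdisj f hfT
  have hne : (𝔭 : Ideal R) ≠ ⊤ := fun h => hf𝔭 (h ▸ Submodule.mem_top)
  have hprime : 𝔭.IsPrime := by
    refine ⟨hne, ?_⟩
    intro x y hxy
    by_contra hcon
    push_neg at hcon
    obtain ⟨hx, hy⟩ := hcon
    -- pcl (𝔭 ∪ {x}) must meet T
    have hmeet : ∀ z : R, z ∉ 𝔭 → ∃ t ∈ T, t ∈ pcl σR (↑𝔭 ∪ {z}) := by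
      intro z hz
      by_contra hcon2
      push_neg at hcon2
      have hmemF : pcl σR (↑𝔭 ∪ {z}) ∈ F := by
        refine ⟨pcl_isPerf, ?_, hcon2⟩
        exact le_trans h𝔞𝔭 (le_trans (Set.subset_union_left.trans subset_pcl)
          (le_refl _))
      have hle : 𝔭 ≤ pcl σR (↑𝔭 ∪ {z}) := fun a ha =>
        subset_pcl (Set.mem_union_left _ ha)
      have hle2 : pcl σR (↑𝔭 ∪ {z}) ≤ 𝔭 := hmaximal.2 hmemF hle
      exact hz (hle2 (subset_pcl (Set.mem_union_right _ rfl)))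
    obtain ⟨t1, ht1T, ht1⟩ := hmeet x hx
    obtain ⟨t2, ht2T, ht2⟩ := hmeet y hy
    exact hTdisj _ (hTmul t1 ht1T t2 ht2T) (pcl_mul hperf hxy ht1 ht2)
  refine ⟨𝔭, hprime, ?_, h𝔞𝔭, hf𝔭⟩
  apply le_antisymm
  · intro r hr
    have : r * σR r ∈ 𝔭 := Ideal.mul_mem_left _ _ hr
    apply hperf.2 r 1 ![0, 1]
    have h2 : (∏ i : Fin 2, (⇑σR)^[(![0,1] : Fin 2 → ℕ) i] r) = r * σR r := by
      rw [Fin.prod_univ_two]; simp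
    exact h2 ▸ this
  · intro r hr
    exact hperf.1 r hr

end Exists
section PartB
variable {k R : Type u} [Field k] [CommRing R] [Algebra k R]

lemma exists_max_sigma_prime (σk : k →+* k) (hclosed : IsSigmaClosed σk)
    (σR : R →+* R)
    (hcompat : ∀ a : k, σR (algebraMap k R a) = algebraMap k R (σk a))
    (hfg : ∃ s : Finset R,
      Algebra.adjoin k {x | ∃ i : ℕ, ∃ b ∈ s, x = (⇑σR)^[i] b} = ⊤)
    (𝔭 : Ideal R) (hp : 𝔭.IsPrime) (hpcom : Ideal.comap σR 𝔭 = 𝔭)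
    {f : R} (hf : f ∉ 𝔭) :
    ∃ 𝔮 : Ideal R, 𝔮.IsPrime ∧ Ideal.comap σR 𝔮 = 𝔮 ∧
      (∀ 𝔮' : Ideal R, 𝔮'.IsPrime ∧ Ideal.comap σR 𝔮' = 𝔮' → 𝔮 ≤ 𝔮' → 𝔮' = 𝔮) ∧
      𝔭 ≤ 𝔮 ∧ f ∉ 𝔮 := by
  haveI := hp
  have hσ𝔭 : 𝔭 ≤ Ideal.comap σR 𝔭 := le_of_eq hpcom.symm
  set A := R ⧸ 𝔭 with hA
  set π : R →+* A := Ideal.Quotient.mk 𝔭 with hπ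
  set σA : A →+* A := Ideal.quotientMap 𝔭 σR hσ𝔭 with hσA
  have hσAπ : ∀ r : R, σA (π r) = π (σR r) := fun r => Ideal.quotientMap_mk
  have hπ0 : ∀ r : R, π r = 0 ↔ r ∈ 𝔭 := fun r => Ideal.Quotient.eq_zero_iff_mem
  have hσAinj : Function.Injective ⇑σA := by
    rw [injective_iff_map_eq_zero]
    intro a ha
    obtain ⟨r, rfl⟩ := Ideal.Quotient.mk_surjective a
    rw [hσAπ, hπ0] at ha
    exact (hπ0 r).2 (hpcom ▸ Ideal.mem_comap.2 ha)
  set fb : A := π f with hfb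
  have hfb0 : fb ≠ 0 := fun h => hf ((hπ0 f).1 h)
  set M : Submonoid A := Submonoid.closure (Set.range fun i : ℕ => (⇑σA)^[i] fb)
    with hM
  have hfbM : fb ∈ M := Submonoid.subset_closure ⟨0, rfl⟩
  have hM0 : M ≤ nonZeroDivisors A := by
    rw [hM, Submonoid.closure_le]
    rintro _ ⟨i, rfl⟩
    refine mem_nonZeroDivisors_of_ne_zero ?_
    intro h
    exact hfb0 (Function.Injective.iterate hσAinj i (by simpa using h))
  set L := Localization M with hL
  letI : Algebra k L := ((algebraMap A L).comp (algebraMap k A)).toAlgebra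
  have halgkL : (algebraMap k L) = (algebraMap A L).comp (algebraMap k A) :=
    RingHom.algebraMap_toAlgebra _
  have hMcom : M ≤ M.comap σA := by
    rw [hM, Submonoid.closure_le]
    rintro _ ⟨i, rfl⟩
    exact Submonoid.subset_closure ⟨i + 1, Function.iterate_succ_apply' (⇑σA) i fb⟩
  set σL : L →+* L := IsLocalization.map L σA hMcom with hσL
  have hmapeq : ∀ a : A, σL (algebraMap A L a) = algebraMap A L (σA a) :=
    fun a => IsLocalization.map_eq hMcom a
  have hAinj : Function.Injective (algebraMap A L) := IsLocalization.injective L hM0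
  haveI hLdom : IsDomain L := IsLocalization.isDomain_of_le_nonZeroDivisors L hM0
  have hunits : ∀ m : M, IsUnit (algebraMap A L (m : A)) :=
    fun m => IsLocalization.map_units L m
  have hσLinj : Function.Injective ⇑σL := by
    rw [injective_iff_map_eq_zero]
    intro x hx
    obtain ⟨⟨a, m⟩, hxa⟩ := IsLocalization.surj M x
    have h2 := congrArg σL hxa
    rw [map_mul, hx, zero_mul, hmapeq] at h2
    have ha0 : a = 0 := by
      have := hAinj (h2.symm.trans (map_zero _).symm)
      exact hσAinj (by simpa using this)
    rw [ha0, map_zero] at hxa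
    exact ((hunits m).mul_left_eq_zero).1 hxa
  have hσAk : ∀ c : k, σA (algebraMap k A c) = algebraMap k A (σk c) := by
    intro c
    rw [← Ideal.Quotient.mk_algebraMap, ← Ideal.Quotient.mk_algebraMap]
    rw [show (Ideal.Quotient.mk 𝔭) (algebraMap k R c) = π (algebraMap k R c) from rfl,
      hσAπ, hcompat]
  have hσLk : ∀ c : k, σL (algebraMap k L c) = algebraMap k L (σk c) := by
    intro c
    rw [halgkL, RingHom.comp_apply, hmapeq, hσAk, RingHom.comp_apply]
  obtain ⟨s, hs⟩ := hfg
  classical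
  set χ : R →+* L := (algebraMap A L).comp π with hχ
  have hχσ : ∀ r : R, χ (σR r) = σL (χ r) := by
    intro r
    calc χ (σR r) = algebraMap A L (π (σR r)) := rfl
    _ = algebraMap A L (σA (π r)) := by rw [hσAπ]
    _ = σL (χ r) := (hmapeq _).symm
  have hχσi : ∀ (i : ℕ) (r : R), χ ((⇑σR)^[i] r) = (⇑σL)^[i] (χ r) := by
    intro i
    induction i with
    | zero => intro r; rfl
    | succ i ih =>
      intro r
      rw [Function.iterate_succ_apply', Function.iterate_succ_apply', hχσ, ih]
  have hu : IsUnit (algebraMap A L fb) := hunits ⟨fb, hfbM⟩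
  set invf : L := ↑hu.unit⁻¹ with hinvf
  have hinv1 : invf * algebraMap A L fb = 1 := IsUnit.val_inv_mul hu
  set s' : Finset L := insert invf (s.image χ) with hs'
  set genset : Set L := {x | ∃ i : ℕ, ∃ b ∈ s', x = (⇑σL)^[i] b} with hgenset
  set S : Subalgebra k L := Algebra.adjoin k genset with hS
  have hSσinv : ∀ i : ℕ, (⇑σL)^[i] invf ∈ S :=
    fun i => Algebra.subset_adjoin ⟨i, invf, Finset.mem_insert_self _ _, rfl⟩
  have hinv_i : ∀ i : ℕ, (⇑σL)^[i] invf * algebraMap A L ((⇑σA)^[i] fb) = 1 := by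
    intro i
    induction i with
    | zero => exact hinv1
    | succ i ih =>
      have := congrArg σL ih
      rw [map_mul, map_one, hmapeq] at this
      rw [Function.iterate_succ_apply' (⇑σL), Function.iterate_succ_apply' (⇑σA)]
      exact this
  have hMinv : ∀ m ∈ M, ∃ t, t ∈ S ∧ t * algebraMap A L m = 1 := by
    intro m hm
    induction hm using Submonoid.closure_induction with
    | mem x hx =>
      obtain ⟨i, rfl⟩ := hx
      exact ⟨(⇑σL)^[i] invf, hSσinv i, hinv_i i⟩
    | one => exact ⟨1, Subalgebra.one_mem S, by rw [map_one, mul_one]⟩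
    | mul x y hx hy ihx ihy =>
      obtain ⟨t1, ht1S, ht1⟩ := ihx
      obtain ⟨t2, ht2S, ht2⟩ := ihy
      refine ⟨t1 * t2, Subalgebra.mul_mem S ht1S ht2S, ?_⟩
      rw [map_mul]
      calc t1 * t2 * (algebraMap A L x * algebraMap A L y)
          = (t1 * algebraMap A L x) * (t2 * algebraMap A L y) := by ring
      _ = 1 := by rw [ht1, ht2, one_mul]
  have hχk : ∀ c : k, χ (algebraMap k R c) = algebraMap k L c := by
    intro c
    calc χ (algebraMap k R c) = algebraMap A L (π (algebraMap k R c)) := rfl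
    _ = algebraMap A L (algebraMap k A c) := by rw [Ideal.Quotient.mk_algebraMap]
    _ = algebraMap k L c := by rw [halgkL]; rfl
  have hχS : ∀ r : R, χ r ∈ S := by
    set χₐ : R →ₐ[k] L := { toRingHom := χ, commutes' := hχk } with hχₐ
    have hle : Algebra.adjoin k {x | ∃ i : ℕ, ∃ b ∈ s, x = (⇑σR)^[i] b}
        ≤ S.comap χₐ := by
      apply Algebra.adjoin_le
      rintro _ ⟨i, b, hb, rfl⟩
      rw [SetLike.mem_coe, Subalgebra.mem_comap]
      show χ ((⇑σR)^[i] b) ∈ S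
      rw [hχσi]
      exact Algebra.subset_adjoin ⟨i, χ b,
        Finset.mem_insert_of_mem (Finset.mem_image_of_mem χ hb), rfl⟩
    intro r
    have hr : r ∈ Algebra.adjoin k {x | ∃ i : ℕ, ∃ b ∈ s, x = (⇑σR)^[i] b} :=
      hs ▸ Algebra.mem_top
    exact (hle hr : _)
  have hgen : S = ⊤ := by
    rw [eq_top_iff]
    intro x _
    obtain ⟨⟨a, m⟩, hx⟩ := IsLocalization.surj M x
    obtain ⟨t, htS, htm⟩ := hMinv m m.2
    obtain ⟨r, hr⟩ := Ideal.Quotient.mk_surjective a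
    have hxa : x = algebraMap A L a * t := by
      calc x = x * (algebraMap A L (m : A) * t) := by
            rw [mul_comm (algebraMap A L (m : A)) t, htm, mul_one]
      _ = (x * algebraMap A L (m : A)) * t := by ring
      _ = algebraMap A L a * t := by rw [hx]
    rw [hxa]
    have haS : algebraMap A L a ∈ S := by
      rw [← hr]
      exact hχS r
    exact Subalgebra.mul_mem S haS htS
  obtain ⟨φ, hφ⟩ := hclosed L σL hσLk ⟨s', hgen⟩ hLdom hσLinj
  set ψ : R →+* k := φ.toRingHom.comp χ with hψ
  have hψσ : ∀ r : R, ψ (σR r) = σk (ψ r) := by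
    intro r
    calc ψ (σR r) = φ (χ (σR r)) := rfl
    _ = φ (σL (χ r)) := by rw [hχσ]
    _ = σk (φ (χ r)) := hφ _
  have hψalg : ∀ c : k, ψ (algebraMap k R c) = c := by
    intro c
    calc ψ (algebraMap k R c) = φ (χ (algebraMap k R c)) := rfl
    _ = φ (algebraMap k L c) := by rw [hχk]
    _ = algebraMap k k c := φ.commutes c
    _ = c := by simp
  have hψsurj : Function.Surjective ⇑ψ := fun c => ⟨algebraMap k R c, hψalg c⟩
  have hqmax : (RingHom.ker ψ).IsMaximal := RingHom.ker_isMaximal_of_surjective ψ hψsurj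
  refine ⟨RingHom.ker ψ, hqmax.isPrime, ?_, ?_, ?_, ?_⟩
  · ext r
    rw [Ideal.mem_comap, RingHom.mem_ker, RingHom.mem_ker, hψσ]
    exact ⟨fun h => by simpa using RingHom.injective σk (h.trans (map_zero σk).symm),
      fun h => by rw [h, map_zero]⟩
  · intro 𝔮' ⟨hp', _⟩ hle
    exact (hqmax.eq_of_le hp'.ne_top hle).symm
  · intro a ha
    rw [RingHom.mem_ker]
    have : π a = 0 := (hπ0 a).2 ha
    calc ψ a = φ (algebraMap A L (π a)) := rfl
    _ = 0 := by rw [this, map_zero, map_zero]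
  · rw [RingHom.mem_ker]
    have : ψ f = φ (algebraMap A L fb) := rfl
    rw [this]
    exact (hu.map φ.toRingHom).ne_zero

end PartB

/-- over a σ-closed σ-field, every perfect σ-ideal of a finitely
σ-generated `k`-σ-algebra is the intersection of the maximal σ-prime ideals
containing it. -/
theorem stmt_16 {k R : Type u} [Field k] [CommRing R] [Algebra k R]
    (σk : k →+* k) (hclosed : IsSigmaClosed σk)
    (σR : R →+* R)
    (hcompat : ∀ a : k, σR (algebraMap k R a) = algebraMap k R (σk a))
    (hfg : ∃ s : Finset R,
      Algebra.adjoin k {x | ∃ i : ℕ, ∃ b ∈ s, x = (⇑σR)^[i] b} = ⊤)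
    (𝔞 : Ideal R) (hσ𝔞 : ∀ a ∈ 𝔞, σR a ∈ 𝔞)
    (hperf : ∀ (r : R) (m : ℕ) (α : Fin (m + 1) → ℕ),
      (∏ i, (⇑σR)^[α i] r) ∈ 𝔞 → r ∈ 𝔞) :
    𝔞 = sInf {𝔮 : Ideal R |
      (𝔮.IsPrime ∧ Ideal.comap σR 𝔮 = 𝔮) ∧
      (∀ 𝔮' : Ideal R, 𝔮'.IsPrime ∧ Ideal.comap σR 𝔮' = 𝔮' → 𝔮 ≤ 𝔮' → 𝔮' = 𝔮) ∧
      𝔞 ≤ 𝔮} := by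
  refine le_antisymm (le_sInf fun 𝔮 h𝔮 => h𝔮.2.2) ?_
  intro x hx
  by_contra hxa
  obtain ⟨𝔭, hp, hpc, ha𝔭, hx𝔭⟩ := exists_sigma_prime σR ⟨hσ𝔞, hperf⟩ hxa
  obtain ⟨𝔮, hq, hqc, hqmax, h𝔭𝔮, hx𝔮⟩ :=
    exists_max_sigma_prime σk hclosed σR hcompat hfg 𝔭 hp hpc hx𝔭
  exact hx𝔮 (Submodule.mem_sInf.1 hx 𝔮 ⟨⟨hq, hqc⟩, hqmax, le_trans ha𝔭 h𝔭𝔮⟩)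
end
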